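/- Let a rooted tree on {1,…,d} be given, let k be a non-root node, and let p : ∏_{i=1}^d [n_i] → ℝ be a strictly positive probability distribution that factorizes over the tree, i.e. p(x) = φ(x_{r₀})·∏_{j ≠ r₀} ψ_j(x_j, x_{P(j)}) with all factors positive. Then for any subsets S₁ ⊆ L(k) ∪ {k} and S₂ ⊆ R(k) with P(k) ∈ S₂, the column space of the unfolding matrix (M_{S₁∪S₂} p)(x_{S₁}; x_{S₂}) equals the column space of the unfolding matrix (M_{S₁∪{P(k)}} p)(x_{S₁}; x_{P(k)}). -/

import Mathlib

/-!
Let `K = L(k) ∪ {k}` be the subtree hanging from `k`. Grouping the tree factors of `p` according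
to whether the child lies in `K` writes `p = A · B` with `A > 0` a function of the coordinates
outside `K` and `B` a function of the coordinates in `K` together with `x_{P(k)}`. A column index
of either unfolding fixes `x_{P(k)}`, so every entry splits as a product of a sum over the
coordinates in `K` and a sum over those outside `K`; as a consequence the column of
`(M_{S₁∪S₂} p)(x_{S₁}; x_{S₂})` at `b` is a positive multiple of the column of
`(M_{S₁∪{P(k)}} p)(x_{S₁}; x_{P(k)})` at `b_{P(k)}`.
-/

open scoped Classical

noncomputable section

/-- A rooted tree on the vertex set `Fin d`: a root and a parent map fixing the root,
such that every vertex reaches the root under iteration of the parent map. -/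
structure ParentTree (d : ℕ) where
  root : Fin d
  parent : Fin d → Fin d
  parent_root : parent root = root
  reaches_root : ∀ v : Fin d, ∃ m : ℕ, parent^[m] v = root

namespace ParentTree

variable {d : ℕ}

/-- The children of a node `k`. -/
def children (T : ParentTree d) (k : Fin d) : Set (Fin d) :=
  {w | w ≠ T.root ∧ w ≠ k ∧ T.parent w = k}

/-- The descendants of a node `w` (the "left" set `L(w)`). -/
def desc (T : ParentTree d) (w : Fin d) : Set (Fin d) :=
  {v | v ≠ w ∧ ∃ m : ℕ, 1 ≤ m ∧ T.parent^[m] v = w}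

end ParentTree

/-- The unfolding matrix of the marginalization `M_{S₁∪S₂} p`, with rows indexed by
the variables in `S₁` and columns indexed by the variables in `S₂` (for disjoint
`S₁, S₂`): its `(a, b)` entry is the sum of `p x` over all full configurations `x`
agreeing with `a` on `S₁` and with `b` on `S₂`. -/
def margUnfold {d : ℕ} {n : Fin d → ℕ} (p : (∀ i, Fin (n i)) → ℝ)
    (S₁ S₂ : Set (Fin d)) :
    Matrix ((i : S₁) → Fin (n i.1)) ((j : S₂) → Fin (n j.1)) ℝ :=
  Matrix.of fun a b =>
    ∑ x : ∀ i, Fin (n i),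
      if (∀ i : S₁, x i.1 = a i) ∧ (∀ j : S₂, x j.1 = b j) then p x else 0

namespace ParentTree

variable {d : ℕ} (T : ParentTree d) {k v : Fin d}

def subtree (k : Fin d) : Set (Fin d) := {v | ∃ m, T.parent^[m] v = k}

theorem desc_union_singleton_eq_subtree : T.desc k ∪ {k} = T.subtree k := by
  ext v
  constructor
  · rintro (⟨-, m, -, hm⟩ | rfl)
    exacts [⟨m, hm⟩, ⟨0, rfl⟩]
  · rintro ⟨_ | m, hm⟩
    · exact Or.inr hm
    · by_cases hv : v = k
      exacts [Or.inr hv, Or.inl ⟨hv, m + 1, m.succ_pos, hm⟩]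

theorem mem_subtree_of_parent_mem (h : T.parent v ∈ T.subtree k) : v ∈ T.subtree k :=
  let ⟨m, hm⟩ := h
  ⟨m + 1, hm⟩

theorem parent_mem_subtree (h : v ∈ T.subtree k) (hv : v ≠ k) : T.parent v ∈ T.subtree k := by
  obtain ⟨_ | m, hm⟩ := h
  exacts [absurd hm hv, ⟨m, hm⟩]

theorem eq_root_of_iterate_eq_self {m : ℕ} (hm : T.parent^[m + 1] v = v) : v = T.root := by
  obtain ⟨t, ht⟩ := T.reaches_root v
  have hperiodic : Function.IsPeriodicPt T.parent (m + 1) v := hm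
  calc v = T.parent^[m * t + t] v := by rw [← Nat.succ_mul]; exact (hperiodic.mul_const t).symm
    _ = T.root := by rw [Function.iterate_add_apply, ht, Function.iterate_fixed T.parent_root]

theorem root_notMem_subtree (hk : k ≠ T.root) : T.root ∉ T.subtree k :=
  fun ⟨m, hm⟩ => hk (hm ▸ Function.iterate_fixed T.parent_root m)

theorem parent_notMem_subtree (hk : k ≠ T.root) : T.parent k ∉ T.subtree k :=
  fun ⟨m, hm⟩ => hk (T.eq_root_of_iterate_eq_self (m := m) hm)

open Finset in
theorem exists_subtree_factorization {n : Fin d → ℕ} {p : (∀ i, Fin (n i)) → ℝ}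
    {φ : Fin (n T.root) → ℝ} {ψ : ∀ j : Fin d, Fin (n j) → Fin (n (T.parent j)) → ℝ}
    (hφ : ∀ y, 0 < φ y) (hψ : ∀ j : Fin d, j ≠ T.root → ∀ y z, 0 < ψ j y z)
    (hp : ∀ x, p x = φ (x T.root) *
      ∏ j ∈ univ.filter (fun j => j ≠ T.root), ψ j (x j) (x (T.parent j)))
    (hk : k ≠ T.root) :
    ∃ A B : (∀ i, Fin (n i)) → ℝ, (∀ x, 0 < A x) ∧ DependsOn A (T.subtree k)ᶜ ∧
      DependsOn B (insert (T.parent k) (T.subtree k)) ∧ ∀ x, p x = A x * B x := by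
  set K := T.subtree k
  refine ⟨fun x => φ (x T.root) *
      ∏ j ∈ univ.filter (fun j => j ≠ T.root ∧ j ∉ K), ψ j (x j) (x (T.parent j)),
    fun x => ∏ j ∈ univ.filter (fun j => j ≠ T.root ∧ j ∈ K), ψ j (x j) (x (T.parent j)),
    fun x => mul_pos (hφ _) (prod_pos fun j hj => hψ j (mem_filter.1 hj).2.1 _ _),
    fun x y hxy => ?_, fun x y hxy => ?_, fun x => ?_⟩
  · simp only [hxy _ (T.root_notMem_subtree hk)]
    refine congrArg _ (prod_congr rfl fun j hj => ?_)
    have hjK := (mem_filter.1 hj).2.2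
    rw [hxy j hjK, hxy _ (mt T.mem_subtree_of_parent_mem hjK)]
  · refine prod_congr rfl fun j hj => ?_
    have hjK := (mem_filter.1 hj).2.2
    have hPj : T.parent j ∈ insert (T.parent k) K := by
      by_cases hjk : j = k
      · exact hjk ▸ Set.mem_insert _ _
      · exact Set.mem_insert_of_mem _ (T.parent_mem_subtree hjK hjk)
    rw [hxy j (Set.mem_insert_of_mem _ hjK), hxy _ hPj]
  · rw [hp, ← prod_filter_mul_prod_filter_not _ (· ∈ K), filter_filter, filter_filter]
    ring

end ParentTree

theorem Matrix.range_mulVecLin_eq_of_col_eq_smul {R m β γ : Type*} [CommSemiring R]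
    [Fintype β] [Fintype γ] {M : Matrix m β R} {N : Matrix m γ R} {σ : β → γ}
    (hσ : Function.Surjective σ) {c : β → R} (hc : ∀ b, IsUnit (c b))
    (h : ∀ b, M.col b = c b • N.col (σ b)) :
    LinearMap.range M.mulVecLin = LinearMap.range N.mulVecLin := by
  simp only [Matrix.range_mulVecLin, Submodule.span_range_eq_iSup, ← hσ.iSup_comp, h,
    Submodule.span_singleton_smul_eq (hc _)]

namespace Set

variable {α : Type*} {π : α → Type*} [∀ a, Nonempty (π a)]

theorem domRestrict_surjective (s : Set α) : Function.Surjective (s.domRestrict (π := π)) :=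
  fun g => ⟨fun a => if h : a ∈ s then g ⟨a, h⟩ else Classical.arbitrary _,
    funext fun a => dif_pos a.2⟩

theorem domRestrict₂_surjective {s t : Set α} (hst : s ⊆ t) :
    Function.Surjective (domRestrict₂ (π := π) hst) :=
  Function.Surjective.of_comp (g := t.domRestrict) (domRestrict_surjective s)

end Set

section Marginal

variable {ι : Type*} {π : ι → Type*} [Fintype ι]

theorem DependsOn.ite_domRestrict_eq {f : (∀ i, π i) → ℝ} {K S : Set ι} (hf : DependsOn f K)
    (hS : S ⊆ K) (b : ∀ j : S, π j) :
    DependsOn (fun x => if S.domRestrict x = b then f x else 0) K := by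
  intro x y hxy
  dsimp only
  rw [show S.domRestrict x = S.domRestrict y from funext fun j => hxy j (hS j.2), hf hxy]

variable [DecidableEq ι] [∀ i, Fintype (π i)]

theorem card_mul_sum_mul_eq_sum_mul_sum {R : Type*} [CommSemiring R] {K : Set ι}
    {f g : (∀ i, π i) → R} (hf : DependsOn f K) (hg : DependsOn g Kᶜ) :
    Fintype.card (∀ i, π i) * ∑ x, f x * g x = (∑ x, f x) * ∑ x, g x := by
  set swap : (∀ i, π i) × (∀ i, π i) → (∀ i, π i) × (∀ i, π i) :=
    fun xy => (K.piecewise xy.1 xy.2, K.piecewise xy.2 xy.1)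
  have hswap : Function.Involutive swap := by
    rintro ⟨x, y⟩
    ext i <;> by_cases hi : i ∈ K <;> simp [swap, Set.piecewise, hi]
  calc
    _ = ∑ xy : (∀ i, π i) × (∀ i, π i), f xy.1 * g xy.1 := by
      simp only [Fintype.sum_prod_type_right, Finset.sum_const, Finset.card_univ, nsmul_eq_mul]
    _ = ∑ xy, f (swap xy).1 * g (swap xy).1 :=
      (Equiv.sum_comp hswap.toPerm fun xy => f xy.1 * g xy.1).symm
    _ = ∑ xy : (∀ i, π i) × (∀ i, π i), f xy.1 * g xy.2 := by
      refine Fintype.sum_congr _ _ fun xy => ?_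
      rw [hf fun i hi => Set.piecewise_eq_of_mem _ _ _ hi,
        hg fun i hi => Set.piecewise_eq_of_notMem _ _ _ hi]
    _ = _ := by rw [Fintype.sum_mul_sum, Fintype.sum_prod_type]

def marginal (f : (∀ i, π i) → ℝ) (S : Set ι) (b : ∀ j : S, π j) : ℝ :=
  ∑ x, if S.domRestrict x = b then f x else 0

theorem marginal_pos [∀ i, Nonempty (π i)] {f : (∀ i, π i) → ℝ} (hf : ∀ x, 0 < f x)
    (S : Set ι) (b : ∀ j : S, π j) : 0 < marginal f S b := by
  obtain ⟨x, hx⟩ := S.domRestrict_surjective b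
  refine Finset.sum_pos' (fun y _ => ?_) ⟨x, Finset.mem_univ x, ?_⟩
  · split_ifs
    exacts [(hf y).le, le_rfl]
  · rw [if_pos hx]
    exact hf x

end Marginal

section Unfolding

variable {d : ℕ} {n : Fin d → ℕ} {p A B : (∀ i, Fin (n i)) → ℝ} {K S₁ S₂ : Set (Fin d)}
  {i₀ : Fin d}

theorem card_mul_margUnfold_apply (hA : DependsOn A Kᶜ) (hB : DependsOn B (insert i₀ K))
    (hp : ∀ x, p x = A x * B x) (hS₁ : S₁ ⊆ K) (hS₂ : S₂ ⊆ Kᶜ) (hi₀ : i₀ ∈ S₂)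
    (a : ∀ i : S₁, Fin (n i)) (b : ∀ j : S₂, Fin (n j)) :
    Fintype.card (∀ i, Fin (n i)) * margUnfold p S₁ S₂ a b =
      marginal (fun x => B (Function.update x i₀ (b ⟨i₀, hi₀⟩))) S₁ a * marginal A S₂ b := by
  have hB' : DependsOn (fun x => B (Function.update x i₀ (b ⟨i₀, hi₀⟩))) K := by
    intro x y hxy
    refine hB fun i hi => ?_
    by_cases h : i = i₀
    · subst h; simp
    · simp [h, hxy i (hi.resolve_left h)]
  rw [marginal, marginal, ← card_mul_sum_mul_eq_sum_mul_sum (hB'.ite_domRestrict_eq hS₁ a)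
    (hA.ite_domRestrict_eq hS₂ b)]
  congr 1
  refine Fintype.sum_congr _ _ fun x => ?_
  simp only [funext_iff, Set.domRestrict_apply]
  by_cases hb : ∀ j : S₂, x j = b j
  · rw [← hb ⟨i₀, hi₀⟩, Function.update_eq_self, hp]
    simp only [hb, implies_true, and_true, if_true, ite_mul, zero_mul, mul_comm (A x)]
  · simp only [hb, and_false, if_false, mul_zero]

theorem range_margUnfold_eq_range_margUnfold_singleton (hA_pos : ∀ x, 0 < A x)
    (hA : DependsOn A Kᶜ) (hB : DependsOn B (insert i₀ K)) (hp : ∀ x, p x = A x * B x)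
    (hS₁ : S₁ ⊆ K) (hS₂ : S₂ ⊆ Kᶜ) (hi₀ : i₀ ∈ S₂) :
    LinearMap.range (margUnfold p S₁ S₂).mulVecLin =
      LinearMap.range (margUnfold p S₁ {i₀}).mulVecLin := by
  rcases isEmpty_or_nonempty (∀ i, Fin (n i)) with hX | hX
  · have hzero : ∀ S, margUnfold p S₁ S = 0 := fun S => by ext; simp [margUnfold]
    simp only [hzero, Matrix.mulVecLin_zero, LinearMap.range_zero]
  have : ∀ i, Nonempty (Fin (n i)) := Classical.nonempty_pi.1 hX
  set σ := Set.domRestrict₂ (π := fun i => Fin (n i)) (Set.singleton_subset_iff.2 hi₀)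
  have hσ : Function.Surjective σ := Set.domRestrict₂_surjective _
  have hG (b) := marginal_pos hA_pos S₂ b
  have hH (b) := marginal_pos hA_pos {i₀} (σ b)
  refine Matrix.range_mulVecLin_eq_of_col_eq_smul hσ
    (c := fun b => marginal A S₂ b / marginal A {i₀} (σ b))
    (fun b => (div_pos (hG b) (hH b)).ne'.isUnit) fun b => funext fun a => ?_
  have hM := card_mul_margUnfold_apply hA hB hp hS₁ hS₂ hi₀ a b
  -- `σ b ⟨i₀, _⟩` unfolds to `b ⟨i₀, hi₀⟩`; `linear_combination` needs this syntactically
  have hN : _ = marginal (fun x => B (Function.update x i₀ (b ⟨i₀, hi₀⟩))) S₁ a * _ :=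
    card_mul_margUnfold_apply hA hB hp hS₁ (Set.singleton_subset_iff.2 (hS₂ hi₀)) rfl a (σ b)
  have hcard : (Fintype.card (∀ i, Fin (n i)) : ℝ) ≠ 0 := Nat.cast_ne_zero.2 Fintype.card_ne_zero
  rw [Matrix.col_apply, Pi.smul_apply, Matrix.col_apply, smul_eq_mul, div_mul_eq_mul_div,
    eq_div_iff (hH b).ne']
  apply mul_left_cancel₀ hcard
  linear_combination marginal A {i₀} (σ b) * hM - marginal A S₂ b * hN

end Unfolding

theorem markov_unfolding_column_space_general {d : ℕ} (T : ParentTree d) (n : Fin d → ℕ)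
    (p : (∀ i, Fin (n i)) → ℝ)
    (φ : Fin (n T.root) → ℝ)
    (ψ : ∀ j : Fin d, Fin (n j) → Fin (n (T.parent j)) → ℝ)
    (hφ : ∀ y, 0 < φ y)
    (hψ : ∀ j : Fin d, j ≠ T.root → ∀ y z, 0 < ψ j y z)
    (hp : ∀ x, p x = φ (x T.root) *
      ∏ j ∈ Finset.univ.filter (fun j => j ≠ T.root), ψ j (x j) (x (T.parent j)))
    (k : Fin d) (hk : k ≠ T.root)
    (S₁ S₂ : Set (Fin d))
    (hS₁ : S₁ ⊆ T.desc k ∪ {k}) (hS₂ : S₂ ⊆ (T.desc k ∪ {k})ᶜ)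
    (hPk : T.parent k ∈ S₂) :
    LinearMap.range (margUnfold p S₁ S₂).mulVecLin =
      LinearMap.range (margUnfold p S₁ ({T.parent k} : Set (Fin d))).mulVecLin := by
  rw [T.desc_union_singleton_eq_subtree] at hS₁ hS₂
  obtain ⟨A, B, hA_pos, hA, hB, hpAB⟩ := T.exists_subtree_factorization hφ hψ hp hk
  exact range_margUnfold_eq_range_margUnfold_singleton hA_pos hA hB hpAB hS₁ hS₂ hPk

/-- for a strictly positive probability distribution factorizing over a
rooted tree, a non-root node `k`, and subsets `S₁ ⊆ L(k) ∪ {k}`, `S₂ ⊆ R(k)` with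
`P(k) ∈ S₂`, the column space of `(M_{S₁∪S₂} p)(x_{S₁}; x_{S₂})` equals the column
space of `(M_{S₁∪{P(k)}} p)(x_{S₁}; x_{P(k)})`. -/
theorem markov_unfolding_column_space {d : ℕ} (T : ParentTree d) (n : Fin d → ℕ)
    (p : (∀ i, Fin (n i)) → ℝ)
    (φ : Fin (n T.root) → ℝ)
    (ψ : ∀ j : Fin d, Fin (n j) → Fin (n (T.parent j)) → ℝ)
    (hφ : ∀ y, 0 < φ y)
    (hψ : ∀ j : Fin d, j ≠ T.root → ∀ y z, 0 < ψ j y z)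
    (hp : ∀ x, p x = φ (x T.root) *
      ∏ j ∈ Finset.univ.filter (fun j => j ≠ T.root), ψ j (x j) (x (T.parent j)))
    (hsum : ∑ x : ∀ i, Fin (n i), p x = 1)
    (k : Fin d) (hk : k ≠ T.root)
    (S₁ S₂ : Set (Fin d))
    (hS₁ : S₁ ⊆ T.desc k ∪ {k}) (hS₂ : S₂ ⊆ (T.desc k ∪ {k})ᶜ)
    (hPk : T.parent k ∈ S₂) :
    LinearMap.range (margUnfold p S₁ S₂).mulVecLin =
      LinearMap.range (margUnfold p S₁ ({T.parent k} : Set (Fin d))).mulVecLin :=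
  markov_unfolding_column_space_general T n p φ ψ hφ hψ hp k hk S₁ S₂ hS₁ hS₂ hPk
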